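/- arXiv:1707.03090 — 2 statements merged into one kernel-verified Lean document; each statement's English description precedes it below -/
import Mathlib

section
/- Let H be a finite group with a series of subgroups 1 = H_0 ⊴ H_1 ⊴ ⋯ ⊴ H_{n-1} ⊴ H_n = H (each H_i normal in H_{i+1}). Suppose that for some i ∈ {0,…,n−1} there exists a subset R ⊆ H_{i+1}/H_i such that (i) the Haar graph H(H_{i+1}/H_i, R) is not vertex-transitive, and (ii) R ≠ Rx and R ≠ xR for every non-identity element x ∈ H_{i+1}/H_i. Then there exists a subset S ⊆ H such that the Haar graph H(H,S) is not a Cayley graph. -/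
/-- The Haar graph of a group `H` with connection set `S ⊆ H`: the bipartite
graph on two copies of `H` (indexed by `Bool`; `false` is the copy `H₀`,
`true` is the copy `H₁`) in which `h₀` is adjacent to `(s*h)₁` for `s ∈ S`. -/
def haarGraph {H : Type*} [Group H] (S : Set H) : SimpleGraph (Bool × H) where
  Adj u v := (u.1 = false ∧ v.1 = true ∧ v.2 * u.2⁻¹ ∈ S) ∨
             (u.1 = true ∧ v.1 = false ∧ u.2 * v.2⁻¹ ∈ S)
  symm := by
    constructor
    rintro ⟨i, x⟩ ⟨j, y⟩ (⟨h1, h2, h3⟩ | ⟨h1, h2, h3⟩)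
    · exact Or.inr ⟨h2, h1, h3⟩
    · exact Or.inl ⟨h2, h1, h3⟩
  loopless := by
    constructor
    rintro ⟨i, x⟩ (⟨h1, h2, _⟩ | ⟨h1, h2, _⟩) <;> simp_all

/-- A graph is a Cayley graph if its automorphism group contains a subgroup
acting regularly on the vertex set. -/
def IsCayleyGraph {V : Type*} (Γ : SimpleGraph V) : Prop :=
  ∃ G : Subgroup (Equiv.Perm V),
    (∀ g ∈ G, ∀ u v : V, Γ.Adj (g u) (g v) ↔ Γ.Adj u v) ∧
    (∀ u v : V, ∃! g : Equiv.Perm V, g ∈ G ∧ g u = v)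

/-- A graph is vertex-transitive if its automorphism group acts transitively
on the vertices. -/
def IsVertexTransitive {V : Type*} (Γ : SimpleGraph V) : Prop :=
  ∀ u v : V, ∃ f : Γ ≃g Γ, f u = v

/-- A group is inner abelian if it is non-abelian but every proper subgroup
is abelian. -/
def IsInnerAbelian (H : Type*) [Group H] : Prop :=
  (¬ ∀ a b : H, a * b = b * a) ∧
    ∀ K : Subgroup H, K ≠ ⊤ → ∀ a b : H, a ∈ K → b ∈ K → a * b = b * a

/-!
Put `N = H_i`, `K = H_{i+1}` and let `S ⊆ K` be the preimage of `R`. A Cayley graph is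
vertex-transitive, and vertex-transitivity of `H(H, S)` forces that of `H(K/N, R)`.

Since `S ⊆ K`, the Haar graph `H(K, S)` sits in `H(H, S)` as a union of connected
components. If an automorphism `σ` of the big graph sends `u` to `v` inside this part,
then `σ` on the component of `u`, `σ⁻¹` on the component of `v` and the identity
elsewhere is an automorphism of `H(K, S)`.

`H(K, S)` is the pullback of `H(K/N, R)` along the quotient map. As `R` is nonempty
(`H(K/N, ∅)` is edgeless, hence vertex-transitive), the conditions `R ≠ Rx`, `R ≠ xR` say
that no two vertices of `H(K/N, R)` have the same neighbourhood. So two vertices of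
`H(K, S)` have the same neighbourhood iff they lie in the same fibre; automorphisms
preserve this relation and therefore descend to `H(K/N, R)`.
-/

open Function

namespace SimpleGraph

variable {V W : Type*} {X : SimpleGraph V} {Y : SimpleGraph W}

open Classical in
lemma isVertexTransitive_bot : IsVertexTransitive (⊥ : SimpleGraph V) :=
  fun u v ↦ ⟨⟨Equiv.swap u v, by simp⟩, Equiv.swap_apply_left u v⟩

section SwapAlongEmbedding

variable [Nonempty V] (ρ : X ↪g Y)

open Classical in
noncomputable def swapConj (σ : Y ≃g Y) (u v x : V) : V :=
  if X.Reachable u x then invFun ρ (σ (ρ x))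
  else if X.Reachable v x then invFun ρ (σ.symm (ρ x)) else x

variable {ρ} (hρ : ∀ x w, Y.Adj (ρ x) w → w ∈ Set.range ρ) {σ : Y ≃g Y} {u v : V}
include hρ

lemma apply_invFun_eq_and_reachable (huv : σ (ρ u) = ρ v) {x : V} (hx : X.Reachable u x) :
    ρ (invFun ρ (σ (ρ x))) = σ (ρ x) ∧ X.Reachable v (invFun ρ (σ (ρ x))) := by
  suffices ∃ y, ρ y = σ (ρ x) ∧ X.Reachable v y by
    obtain ⟨y, hy, hvy⟩ := this
    rw [← hy, leftInverse_invFun ρ.injective y]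
    exact ⟨rfl, hvy⟩
  rw [reachable_iff_reflTransGen] at hx
  induction hx with
  | refl => exact ⟨v, huv.symm, Reachable.refl v⟩
  | tail _ hyz ih =>
    obtain ⟨y, hy, hvy⟩ := ih
    have hadj := hy ▸ σ.map_adj_iff.mpr (ρ.map_adj_iff.mpr hyz)
    obtain ⟨z, hz⟩ := hρ _ _ hadj
    exact ⟨z, hz, hvy.trans (ρ.map_adj_iff.mp (hz ▸ hadj)).reachable⟩

lemma adj_invFun_iff (huv : σ (ρ u) = ρ v) {x y : V} (hx : X.Reachable u x)
    (hy : X.Reachable u y) :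
    X.Adj (invFun ρ (σ (ρ x))) (invFun ρ (σ (ρ y))) ↔ X.Adj x y := by
  rw [← ρ.map_adj_iff, (apply_invFun_eq_and_reachable hρ huv hx).1,
    (apply_invFun_eq_and_reachable hρ huv hy).1, σ.map_adj_iff, ρ.map_adj_iff]

omit hρ in
lemma swapConj_of_reachable_left {x : V} (hux : X.Reachable u x) :
    swapConj ρ σ u v x = invFun ρ (σ (ρ x)) := if_pos hux

omit hρ in
lemma swapConj_of_reachable_right {x : V} (hux : ¬ X.Reachable u x) (hvx : X.Reachable v x) :
    swapConj ρ σ u v x = invFun ρ (σ.symm (ρ x)) := by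
  rw [swapConj, if_neg hux, if_pos hvx]

omit hρ in
lemma swapConj_of_not_reachable {x : V} (hux : ¬ X.Reachable u x) (hvx : ¬ X.Reachable v x) :
    swapConj ρ σ u v x = x := by
  rw [swapConj, if_neg hux, if_neg hvx]

lemma swapConj_symm_swapConj (huv : σ (ρ u) = ρ v) (x : V) :
    swapConj ρ σ.symm v u (swapConj ρ σ u v x) = x := by
  have hvu : σ.symm (ρ v) = ρ u := by rw [← huv, σ.symm_apply_apply]
  by_cases hux : X.Reachable u x
  · obtain ⟨hρx, hvx⟩ := apply_invFun_eq_and_reachable hρ huv hux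
    rw [swapConj_of_reachable_left hux, swapConj_of_reachable_left hvx, hρx,
      σ.symm_apply_apply, leftInverse_invFun ρ.injective x]
  by_cases hvx : X.Reachable v x
  · obtain ⟨hρx, hux'⟩ := apply_invFun_eq_and_reachable hρ hvu hvx
    have hvx' : ¬ X.Reachable v (invFun ρ (σ.symm (ρ x))) :=
      fun h ↦ hux ((hux'.trans h.symm).trans hvx)
    rw [swapConj_of_reachable_right hux hvx, swapConj_of_reachable_right hvx' hux', Iso.symm,
      RelIso.symm_symm, hρx, σ.apply_symm_apply, leftInverse_invFun ρ.injective x]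
  · rw [swapConj_of_not_reachable hux hvx, swapConj_of_not_reachable hvx hux]

lemma swapConj_adj (huv : σ (ρ u) = ρ v) {x y : V} (hxy : X.Adj x y) :
    X.Adj (swapConj ρ σ u v x) (swapConj ρ σ u v y) := by
  have hvu : σ.symm (ρ v) = ρ u := by rw [← huv, σ.symm_apply_apply]
  have hreach {a : V} : X.Reachable a x ↔ X.Reachable a y :=
    ⟨fun h ↦ h.trans hxy.reachable, fun h ↦ h.trans hxy.symm.reachable⟩
  by_cases hux : X.Reachable u x
  · rw [swapConj_of_reachable_left hux, swapConj_of_reachable_left (hreach.mp hux)]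
    exact (adj_invFun_iff hρ huv hux (hreach.mp hux)).mpr hxy
  by_cases hvx : X.Reachable v x
  · rw [swapConj_of_reachable_right hux hvx,
      swapConj_of_reachable_right (hreach.not.mp hux) (hreach.mp hvx)]
    exact (adj_invFun_iff hρ hvu hvx (hreach.mp hvx)).mpr hxy
  · rwa [swapConj_of_not_reachable hux hvx,
      swapConj_of_not_reachable (hreach.not.mp hux) (hreach.not.mp hvx)]

noncomputable def swapIso (huv : σ (ρ u) = ρ v) : X ≃g X where
  toFun := swapConj ρ σ u v
  invFun := swapConj ρ σ.symm v u
  left_inv := swapConj_symm_swapConj hρ huv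
  right_inv := swapConj_symm_swapConj (σ := σ.symm) hρ (by rw [← huv, σ.symm_apply_apply])
  map_rel_iff' {x y} := by
    refine ⟨fun h ↦ ?_, swapConj_adj hρ huv⟩
    have hvu : σ.symm (ρ v) = ρ u := by rw [← huv, σ.symm_apply_apply]
    have := swapConj_adj hρ hvu (show X.Adj (swapConj ρ σ u v x) (swapConj ρ σ u v y) from h)
    rwa [swapConj_symm_swapConj hρ huv, swapConj_symm_swapConj hρ huv] at this

lemma swapIso_apply (huv : σ (ρ u) = ρ v) : swapIso hρ huv u = v := by
  change swapConj ρ σ u v u = v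
  rw [swapConj_of_reachable_left (Reachable.refl u), huv, leftInverse_invFun ρ.injective v]

end SwapAlongEmbedding

lemma _root_.IsVertexTransitive.of_embedding (ρ : X ↪g Y)
    (hρ : ∀ x w, Y.Adj (ρ x) w → w ∈ Set.range ρ) (h : IsVertexTransitive Y) :
    IsVertexTransitive X := by
  intro u v
  have : Nonempty V := ⟨u⟩
  obtain ⟨σ, hσ⟩ := h (ρ u) (ρ v)
  exact ⟨swapIso hρ hσ, swapIso_apply hρ hσ⟩

section Descent

variable {p : W → V} (hp : Surjective p) (hX : Injective X.neighborSet)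
include hp hX

lemma apply_eq_apply_of_comap (σ : X.comap p ≃g X.comap p) {y y' : W} (h : p y = p y') :
    p (σ y) = p (σ y') := by
  apply hX
  apply Set.preimage_injective.mpr hp
  ext w
  change (X.comap p).Adj (σ y) w ↔ (X.comap p).Adj (σ y') w
  rw [← σ.apply_symm_apply w, σ.map_adj_iff, σ.map_adj_iff, comap_adj, comap_adj, h]

lemma surjInv_comap_apply (σ : X.comap p ≃g X.comap p) (y : W) :
    p (σ (surjInv hp (p y))) = p (σ y) :=
  apply_eq_apply_of_comap hp hX σ (surjInv_eq hp (p y))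

noncomputable def descendIso (σ : X.comap p ≃g X.comap p) : X ≃g X where
  toFun x := p (σ (surjInv hp x))
  invFun x := p (σ.symm (surjInv hp x))
  left_inv x := by
    obtain ⟨y, rfl⟩ := hp x
    simp only [surjInv_comap_apply hp hX, σ.symm_apply_apply]
  right_inv x := by
    obtain ⟨y, rfl⟩ := hp x
    simp only [surjInv_comap_apply hp hX, σ.apply_symm_apply]
  map_rel_iff' {x x'} := by
    obtain ⟨y, rfl⟩ := hp x
    obtain ⟨y', rfl⟩ := hp x'
    simp only [Equiv.coe_fn_mk, surjInv_comap_apply hp hX]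
    exact comap_adj.symm.trans (σ.map_adj_iff.trans comap_adj)

lemma descendIso_apply (σ : X.comap p ≃g X.comap p) (y : W) :
    descendIso hp hX σ (p y) = p (σ y) :=
  surjInv_comap_apply hp hX σ y

lemma _root_.IsVertexTransitive.of_comap (h : IsVertexTransitive (X.comap p)) :
    IsVertexTransitive X := by
  intro x x'
  obtain ⟨y, rfl⟩ := hp x
  obtain ⟨y', rfl⟩ := hp x'
  obtain ⟨σ, hσ⟩ := h y y'
  exact ⟨descendIso hp hX σ, by rw [descendIso_apply, hσ]⟩

end Descent

end SimpleGraph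

lemma IsCayleyGraph.isVertexTransitive {V : Type*} {Γ : SimpleGraph V} (h : IsCayleyGraph Γ) :
    IsVertexTransitive Γ := by
  obtain ⟨G, hGadj, hGreg⟩ := h
  intro u v
  obtain ⟨g, ⟨hg, hgu⟩, -⟩ := hGreg u v
  exact ⟨⟨g, hGadj g hg _ _⟩, hgu⟩

section Haar

variable {G Q : Type*} [Group G] [Group Q]

lemma haarGraph_empty : haarGraph (∅ : Set G) = ⊥ := by
  ext ⟨b, x⟩ ⟨b', y⟩
  simp [haarGraph]

lemma haarGraph_preimage (f : G →* Q) (R : Set Q) :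
    haarGraph (f ⁻¹' R) = (haarGraph R).comap (Prod.map id f) := by
  ext ⟨b, x⟩ ⟨b', y⟩
  simp [haarGraph]

lemma neighborSet_haarGraph_injective {R : Set Q} (hR : R.Nonempty)
    (hrigid : ∀ x : Q, x ≠ 1 → R ≠ (fun s => s * x) '' R ∧ R ≠ (fun s => x * s) '' R) :
    Injective (haarGraph R).neighborSet := by
  rintro ⟨b, x⟩ ⟨b', x'⟩ h
  have hadj (w : Bool × Q) := Set.ext_iff.mp h w
  obtain ⟨r, hr⟩ := hR
  cases b <;> cases b'
  · have hR : R = (fun s => s * (x' * x⁻¹)) '' R := by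
      rw [Set.image_mul_right]
      ext t
      simpa [haarGraph, mul_assoc] using hadj (true, t * x)
    by_contra hne
    exact (hrigid _ (mul_inv_eq_one.not.mpr (Ne.symm (by simpa using hne)))).1 hR
  · simpa [haarGraph] using (hadj (true, r * x)).mp (by simpa [haarGraph] using hr)
  · simpa [haarGraph] using (hadj (false, r⁻¹ * x)).mp (by simpa [haarGraph] using hr)
  · have hR : R = (fun s => (x * x'⁻¹) * s) '' R := by
      rw [Set.image_mul_left]
      ext t
      simpa [haarGraph, mul_assoc] using hadj (false, t⁻¹ * x)
    by_contra hne
    exact (hrigid _ (mul_inv_eq_one.not.mpr (by simpa using hne))).2 hR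

def haarGraphSubtypeEmbedding (K : Subgroup G) (T : Set K) :
    haarGraph T ↪g haarGraph (Subtype.val '' T) where
  toEmbedding := (Embedding.refl Bool).prodMap (Embedding.subtype _)
  map_rel_iff' := by
    have key (a c : K) : (a : G) * (c : G)⁻¹ ∈ Subtype.val '' T ↔ a * c⁻¹ ∈ T := by
      rw [← Subgroup.coe_inv, ← Subgroup.coe_mul, Subtype.val_injective.mem_set_image]
    rintro ⟨b, x⟩ ⟨b', y⟩
    change (haarGraph _).Adj (b, (x : G)) (b', (y : G)) ↔ (haarGraph T).Adj (b, x) (b', y)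
    simp only [haarGraph, key]

lemma haarGraphSubtypeEmbedding_adj_mem_range {K : Subgroup G} {T : Set K} (x : Bool × K)
    (w : Bool × G) (h : (haarGraph (Subtype.val '' T)).Adj (haarGraphSubtypeEmbedding K T x) w) :
    w ∈ Set.range (haarGraphSubtypeEmbedding K T) := by
  obtain ⟨b', a⟩ := w
  have hK {g : G} (hg : g ∈ Subtype.val '' T) : g ∈ K := by
    obtain ⟨t, -, rfl⟩ := hg
    exact t.2
  have ha : a ∈ K := by
    rcases h with ⟨-, -, h⟩ | ⟨-, -, h⟩
    · exact (K.mul_mem_cancel_right (K.inv_mem x.2.2)).mp (hK h)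
    · exact K.inv_mem_iff.mp ((K.mul_mem_cancel_left x.2.2).mp (hK h))
  exact ⟨(b', ⟨a, ha⟩), rfl⟩

end Haar

theorem normal_series_criterion_non_cayley_haar_general
    {H : Type*} [Group H] (n : ℕ)
    (c : Fin (n + 1) → Subgroup H)
    (i : Fin n)
    [inst : ((c i.castSucc).subgroupOf (c i.succ)).Normal]
    (R : Set (↥(c i.succ) ⧸ (c i.castSucc).subgroupOf (c i.succ)))
    (h1 : ¬ IsVertexTransitive (haarGraph R))
    (h2 : ∀ x : ↥(c i.succ) ⧸ (c i.castSucc).subgroupOf (c i.succ), x ≠ 1 →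
      R ≠ (fun s => s * x) '' R ∧ R ≠ (fun s => x * s) '' R) :
    ∃ S : Set H, ¬ IsCayleyGraph (haarGraph S) := by
  have hR : R.Nonempty := Set.nonempty_iff_ne_empty.mpr fun hR ↦
    h1 (by rw [hR, haarGraph_empty]; exact SimpleGraph.isVertexTransitive_bot)
  refine ⟨Subtype.val '' (QuotientGroup.mk' _ ⁻¹' R), fun hC ↦ h1 ?_⟩
  have hK := hC.isVertexTransitive.of_embedding _ haarGraphSubtypeEmbedding_adj_mem_range
  rw [haarGraph_preimage] at hK
  exact hK.of_comap (surjective_id.prodMap (QuotientGroup.mk'_surjective _))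
    (neighborSet_haarGraph_injective hR h2)

theorem normal_series_criterion_non_cayley_haar
    {H : Type*} [Group H] [Finite H] (n : ℕ)
    (c : Fin (n + 1) → Subgroup H)
    (h0 : c 0 = ⊥) (hn : c (Fin.last n) = ⊤)
    (hle : ∀ i : Fin n, c i.castSucc ≤ c i.succ)
    (hnorm : ∀ i : Fin n, ((c i.castSucc).subgroupOf (c i.succ)).Normal)
    (i : Fin n)
    [inst : ((c i.castSucc).subgroupOf (c i.succ)).Normal]
    (R : Set (↥(c i.succ) ⧸ (c i.castSucc).subgroupOf (c i.succ)))
    (h1 : ¬ IsVertexTransitive (haarGraph R))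
    (h2 : ∀ x : ↥(c i.succ) ⧸ (c i.castSucc).subgroupOf (c i.succ), x ≠ 1 →
      R ≠ (fun s => s * x) '' R ∧ R ≠ (fun s => x * s) '' R) :
    ∃ S : Set H, ¬ IsCayleyGraph (haarGraph S) :=
  normal_series_criterion_non_cayley_haar_general n c i (inst := inst) R h1 h2
end

section
/- Let p and q be distinct primes with q > 2, and let H be a finite inner abelian group with normal Sylow p-subgroup P of order p (i.e. n = 1) and cyclic Sylow q-subgroup Q = ⟨b⟩, so that H = P⟨b⟩. Let a ∈ P be a non-identity element and let Γ = H(H, {1, a, a^{-1}, b}). Then every automorphism of Γ fixes each of the two bipartition sets H_0 and H_1 setwise. -/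
theorem SimpleGraph.Reachable.eq_iff_eq_of_adj_ne {V : Type*} {G : SimpleGraph V}
    {c d : V → Bool} (hc : ∀ ⦃u v⦄, G.Adj u v → c u ≠ c v)
    (hd : ∀ ⦃u v⦄, G.Adj u v → d u ≠ d v) {u v : V} (h : G.Reachable u v) :
    c u = d u ↔ c v = d v := by
  obtain ⟨w⟩ := h
  induction w with
  | nil => rfl
  | cons huv _ ih =>
    have hbool : ∀ x y z w : Bool, x ≠ y → z ≠ w → (x = z ↔ y = w) := by decide
    exact (hbool _ _ _ _ (hc huv) (hd huv)).trans ih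

theorem SimpleGraph.Iso.commonNeighbors_nontrivial_iff {V W : Type*} {G : SimpleGraph V}
    {G' : SimpleGraph W} (f : G ≃g G') (u v : V) :
    (G'.commonNeighbors (f u) (f v)).Nontrivial ↔ (G.commonNeighbors u v).Nontrivial := by
  have himage : f '' G.commonNeighbors u v = G'.commonNeighbors (f u) (f v) := by
    ext w
    obtain ⟨w, rfl⟩ := f.surjective w
    simp [SimpleGraph.mem_commonNeighbors, f.injective.mem_set_image, f.map_adj_iff]
  rw [← himage, Set.image_nontrivial f.injective]

section HaarGraph

variable {G : Type*} [Group G] {S : Set G}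

@[simp]
theorem haarGraph_adj_false_true {x y : G} :
    (haarGraph S).Adj (false, x) (true, y) ↔ y * x⁻¹ ∈ S := by
  simp [haarGraph]

@[simp]
theorem haarGraph_adj_true_false {x y : G} :
    (haarGraph S).Adj (true, y) (false, x) ↔ y * x⁻¹ ∈ S := by
  simp [haarGraph]

theorem haarGraph_adj_fst_ne {u v : Bool × G} (h : (haarGraph S).Adj u v) : u.1 ≠ v.1 := by
  rcases h with ⟨hu, hv, -⟩ | ⟨hu, hv, -⟩ <;> simp [hu, hv]

theorem haarGraph_preconnected (h1 : 1 ∈ S) (hS : Subgroup.closure S = ⊤) :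
    (haarGraph S).Preconnected := by
  have hside : ∀ x : G, (haarGraph S).Adj (false, x) (true, x) := by simpa using h1
  have hstep : ∀ s ∈ S, ∀ x : G, (haarGraph S).Reachable (false, x) (false, s * x) := by
    intro s hs x
    have hx : (haarGraph S).Adj (false, x) (true, s * x) := by simpa using hs
    exact hx.reachable.trans (hside (s * x)).symm.reachable
  have hfalse : ∀ x : G, (haarGraph S).Reachable (false, 1) (false, x) := by
    intro x
    induction (hS ▸ Subgroup.mem_top x : x ∈ Subgroup.closure S)
      using Subgroup.closure_induction_left with
    | one => rfl
    | mul_left s hs y _ ih => exact ih.trans (hstep s hs y)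
    | inv_mul_cancel s hs y _ ih =>
      exact ih.trans (by simpa using (hstep s hs (s⁻¹ * y)).symm)
  have hroot : ∀ v : Bool × G, (haarGraph S).Reachable (false, 1) v := by
    rintro ⟨_ | _, x⟩
    · exact hfalse x
    · exact (hfalse x).trans (hside x).reachable
  exact fun u v => (hroot u).symm.trans (hroot v)

theorem haarGraph_commonNeighbors_false (x x' : G) :
    (haarGraph S).commonNeighbors (false, x) (false, x') =
      (fun s => (true, s * x)) '' {s ∈ S | s * (x * x'⁻¹) ∈ S} := by
  ext ⟨_ | _, w⟩
  · simp [SimpleGraph.mem_commonNeighbors, haarGraph]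
  · simp only [SimpleGraph.mem_commonNeighbors, haarGraph_adj_false_true, Set.mem_image,
      Set.mem_ofPred_eq, Prod.mk.injEq, true_and]
    constructor
    · rintro ⟨hw, hw'⟩
      exact ⟨w * x⁻¹, ⟨hw, by simpa [mul_assoc] using hw'⟩, by group⟩
    · rintro ⟨s, ⟨hs, hs'⟩, rfl⟩
      exact ⟨by simpa using hs, by simpa [mul_assoc] using hs'⟩

theorem haarGraph_commonNeighbors_true (y y' : G) :
    (haarGraph S).commonNeighbors (true, y) (true, y') =
      (fun s => (false, s * y)) '' {s ∈ S⁻¹ | s * (y * y'⁻¹) ∈ S⁻¹} := by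
  ext ⟨_ | _, w⟩
  · simp only [SimpleGraph.mem_commonNeighbors, haarGraph_adj_true_false, Set.mem_image,
      Set.mem_ofPred_eq, Set.mem_inv, Prod.mk.injEq, true_and]
    constructor
    · rintro ⟨hw, hw'⟩
      exact ⟨w * y⁻¹, ⟨by simpa using hw, by simpa [mul_assoc] using hw'⟩, by group⟩
    · rintro ⟨s, ⟨hs, hs'⟩, rfl⟩
      exact ⟨by simpa using hs, by simpa [mul_assoc] using hs'⟩
  · simp [SimpleGraph.mem_commonNeighbors, haarGraph]

end HaarGraph

section Cyclic

variable {G : Type*} [Group G]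

theorem eq_of_zpow_eq_zpow_of_natAbs_sub_lt {a : G} {m n : ℤ} (h : a ^ m = a ^ n)
    (hmn : (m - n).natAbs < orderOf a) : m = n := by
  by_contra hne
  have hpow : a ^ (m - n).natAbs = 1 := by
    rw [pow_natAbs_eq_one, zpow_sub, h, mul_inv_cancel]
  have := orderOf_le_of_pow_eq_one (by omega) hpow
  omega

theorem exists_zpow_eq_of_mem_one_self_inv {a x : G} (hx : x ∈ ({1, a, a⁻¹} : Set G)) :
    ∃ i : ℤ, -1 ≤ i ∧ i ≤ 1 ∧ a ^ i = x := by
  rcases hx with rfl | rfl | rfl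
  exacts [⟨0, by simp⟩, ⟨1, by simp⟩, ⟨-1, by simp⟩]

/-- Fails for `orderOf a = 4`, where `a⁻¹ * a ^ 2 = a` and `a * a ^ 2 = a⁻¹`. -/
theorem mem_one_self_inv_of_mul_mem_of_mul_mem {a s s' e : G} (ha : 5 ≤ orderOf a)
    (hs : s ∈ ({1, a, a⁻¹} : Set G)) (hse : s * e ∈ ({1, a, a⁻¹} : Set G))
    (hs' : s' ∈ ({1, a, a⁻¹} : Set G)) (hs'e : s' * e ∈ ({1, a, a⁻¹} : Set G))
    (hne : s ≠ s') : e ∈ ({1, a, a⁻¹} : Set G) := by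
  obtain ⟨i, hi₀, hi₁, rfl⟩ := exists_zpow_eq_of_mem_one_self_inv hs
  obtain ⟨j, hj₀, hj₁, hj⟩ := exists_zpow_eq_of_mem_one_self_inv hse
  obtain ⟨i', hi'₀, hi'₁, rfl⟩ := exists_zpow_eq_of_mem_one_self_inv hs'
  obtain ⟨j', hj'₀, hj'₁, hj'⟩ := exists_zpow_eq_of_mem_one_self_inv hs'e
  have he : e = a ^ (-i + j) := by rw [zpow_add, hj, zpow_neg, inv_mul_cancel_left]
  have he' : e = a ^ (-i' + j') := by rw [zpow_add, hj', zpow_neg, inv_mul_cancel_left]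
  have hii' : i ≠ i' := by rintro rfl; exact hne rfl
  have hjj' : -i + j = -i' + j' :=
    eq_of_zpow_eq_zpow_of_natAbs_sub_lt (he.symm.trans he') (by omega)
  have hd : -i + j = 0 ∨ -i + j = 1 ∨ -i + j = -1 := by omega
  rcases hd with hd | hd | hd <;> simp [he, hd]

end Cyclic

section Coset

variable {G : Type*} [Group G] (P : Subgroup G) {A : Set G} {c : G}

theorem mem_and_mul_mem_of_mem_of_ne_one (hA : A ⊆ P) (hc : c ∉ P) {u e : G}
    (hu : u ∈ A ∨ u = c) (hue : u * e ∈ A ∨ u * e = c) (he : e ∈ P) (he1 : e ≠ 1) :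
    u ∈ A ∧ u * e ∈ A := by
  rcases hu with hu | rfl <;> rcases hue with hue | hue
  · exact ⟨hu, hue⟩
  · exact absurd (hue ▸ P.mul_mem (hA hu) he) hc
  · exact absurd (by simpa using P.mul_mem (hA hue) (P.inv_mem he)) hc
  · exact absurd (by simpa using hue) he1

theorem mul_mem_or_eq_of_notMem (hA : A ⊆ P) {u e : G} (hu : u ∈ A ∨ u = c)
    (hue : u * e ∈ A ∨ u * e = c) (he : e ∉ P) (he1 : e ≠ 1) :
    (u = c ∧ u * e ∈ A) ∨ (u ∈ A ∧ u * e = c) := by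
  rcases hu with hu | rfl <;> rcases hue with hue | hue
  · exact absurd (by simpa using P.mul_mem (P.inv_mem (hA hu)) (hA hue)) he
  · exact Or.inr ⟨hu, hue⟩
  · exact Or.inl ⟨rfl, hue⟩
  · exact absurd (by simpa using hue) he1

/-- Otherwise `c * c = (c * u * c⁻¹) * (c * e) ∈ P`. -/
theorem mul_ne_of_mul_mem [P.Normal] (hA : A ⊆ P) (hc2 : c * c ∉ P) {u e : G} (hu : u ∈ A)
    (hce : c * e ∈ A) : u * e ≠ c := by
  intro hue
  have he : e = u⁻¹ * c := by rw [← hue, inv_mul_cancel_left]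
  apply hc2
  have hconj : c * u * c⁻¹ ∈ P := Subgroup.Normal.conj_mem ‹_› u (hA hu) c
  simpa [he, mul_assoc] using P.mul_mem hconj (hA hce)

theorem eq_or_eq_inv_of_sep_mul_mem_nontrivial [P.Normal] {a : G} (haP : a ∈ P)
    (ha : 5 ≤ orderOf a) (hc : c ∉ P) (hc2 : c * c ∉ P) {e : G} (he1 : e ≠ 1)
    (h : {s ∈ ({1, a, a⁻¹, c} : Set G) | s * e ∈ ({1, a, a⁻¹, c} : Set G)}.Nontrivial) :
    e = a ∨ e = a⁻¹ := by
  obtain ⟨s, ⟨hs, hse⟩, s', ⟨hs', hs'e⟩, hne⟩ := h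
  have hA : ({1, a, a⁻¹} : Set G) ⊆ P := by
    simp [Set.insert_subset_iff, P.one_mem, haP, P.inv_mem haP]
  have hT : ∀ {x}, x ∈ ({1, a, a⁻¹, c} : Set G) → x ∈ ({1, a, a⁻¹} : Set G) ∨ x = c := by
    simp only [Set.mem_insert_iff, Set.mem_singleton_iff]
    tauto
  have heP : e ∈ P := by
    by_contra heP
    rcases mul_mem_or_eq_of_notMem P hA (hT hs) (hT hse) heP he1 with ⟨rfl, h₁⟩ | ⟨h₁, h₂⟩ <;>
      rcases mul_mem_or_eq_of_notMem P hA (hT hs') (hT hs'e) heP he1 with ⟨rfl, h₃⟩ | ⟨h₃, h₄⟩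
    · exact hne rfl
    · exact mul_ne_of_mul_mem P hA hc2 h₃ h₁ h₄
    · exact mul_ne_of_mul_mem P hA hc2 h₁ h₃ h₂
    · exact hne (mul_right_cancel (h₂.trans h₄.symm))
  obtain ⟨hsA, hseA⟩ := mem_and_mul_mem_of_mem_of_ne_one P hA hc (hT hs) (hT hse) heP he1
  obtain ⟨hs'A, hs'eA⟩ := mem_and_mul_mem_of_mem_of_ne_one P hA hc (hT hs') (hT hs'e) heP he1
  simpa [he1] using mem_one_self_inv_of_mul_mem_of_mul_mem ha hsA hseA hs'A hs'eA hne

theorem sep_mul_mem_nontrivial_iff [P.Normal] {a : G} (haP : a ∈ P) (ha : 5 ≤ orderOf a)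
    (hc : c ∉ P) (hc2 : c * c ∉ P) {e : G} (he1 : e ≠ 1) :
    {s ∈ ({1, a, a⁻¹, c} : Set G) | s * e ∈ ({1, a, a⁻¹, c} : Set G)}.Nontrivial ↔
      e = a ∨ e = a⁻¹ := by
  refine ⟨eq_or_eq_inv_of_sep_mul_mem_nontrivial P haP ha hc hc2 he1, fun hae => ?_⟩
  obtain ⟨u, hu, rfl⟩ : ∃ u, (u = a ∨ u = a⁻¹) ∧ e = u⁻¹ :=
    ⟨e⁻¹, by rw [inv_eq_iff_eq_inv, inv_eq_iff_eq_inv, inv_inv]; tauto, by simp⟩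
  refine ⟨1, ⟨by simp, ?_⟩, u, ⟨?_, by simp⟩, ?_⟩
  · rcases hu with rfl | rfl <;> simp
  · rcases hu with rfl | rfl <;> simp
  · simpa [eq_comm] using he1

end Coset

section HaarGraphOfCyclic

variable {G : Type*} [Group G] (P : Subgroup G) [P.Normal] {a c : G}

theorem haarGraph_commonNeighbors_nontrivial_iff (haP : a ∈ P) (ha : 5 ≤ orderOf a)
    (hc : c ∉ P) (hc2 : c * c ∉ P) (i : Bool) {x x' : G} (hne : x ≠ x') :
    ((haarGraph ({1, a, a⁻¹, c} : Set G)).commonNeighbors (i, x) (i, x')).Nontrivial ↔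
      x' * x⁻¹ = a ∨ x' * x⁻¹ = a⁻¹ := by
  have he1 : x * x'⁻¹ ≠ 1 := mul_inv_eq_one.not.mpr hne
  have hswap : x' * x⁻¹ = a ∨ x' * x⁻¹ = a⁻¹ ↔ x * x'⁻¹ = a⁻¹ ∨ x * x'⁻¹ = a := by
    rw [← inv_inj (a := x * x'⁻¹), ← inv_inj (a := x * x'⁻¹), mul_inv_rev, inv_inv, inv_inv]
  cases i
  · rw [haarGraph_commonNeighbors_false, Set.image_nontrivial,
      sep_mul_mem_nontrivial_iff P haP ha hc hc2 he1, hswap, or_comm]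
    exact fun s t h => mul_right_cancel (Prod.ext_iff.1 h).2
  · have hinv : ({1, a, a⁻¹, c} : Set G)⁻¹ = {1, a⁻¹, a⁻¹⁻¹, c⁻¹} := by simp
    rw [haarGraph_commonNeighbors_true, Set.image_nontrivial, hinv,
      sep_mul_mem_nontrivial_iff P (P.inv_mem haP) (by rwa [orderOf_inv]) (by rwa [P.inv_mem_iff])
        (by rwa [← mul_inv_rev, P.inv_mem_iff]) he1, hswap, inv_inv]
    exact fun s t h => mul_right_cancel (Prod.ext_iff.1 h).2

end HaarGraphOfCyclic

section Linearization

variable {G : Type*} [Group G] {a : G} {g : G → G}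

/-- Switching alternatives between `y` and `a * y` would give `g (a * (a * y)) = g y`. -/
theorem map_pow_mul_eq_pow_mul (hg : Function.Injective g) (ha : a * a ≠ 1) {u : G}
    (hstep : ∀ y, g (a * y) = u * g y ∨ g (a * y) = u⁻¹ * g y) {z : G}
    (hz : g (a * z) = u * g z) (n : ℕ) : g (a ^ n * z) = u ^ n * g z := by
  have hsucc : ∀ n : ℕ, g (a ^ (n + 1) * z) = u * g (a ^ n * z) := by
    intro n
    induction n with
    | zero => simpa using hz
    | succ n ih =>
      rw [pow_succ' a (n + 1), mul_assoc]
      refine (hstep _).resolve_right fun h => ha ?_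
      have hback : g (a * a * (a ^ n * z)) = g (a ^ n * z) := by
        rw [mul_assoc, ← mul_assoc a (a ^ n), ← pow_succ', h, ih, inv_mul_cancel_left]
      simpa using hg hback
  induction n with
  | zero => simp
  | succ n ih => rw [hsucc, ih, pow_succ', mul_assoc]

theorem map_mul_eq_or_eq_inv_of_mem_zpowers (hg : Function.Injective g) (ha : a * a ≠ 1)
    (hfin : IsOfFinOrder a) (hstep : ∀ y, g (a * y) = a * g y ∨ g (a * y) = a⁻¹ * g y)
    (z : G) : (∀ h ∈ Subgroup.zpowers a, g (h * z) = h * g z) ∨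
      ∀ h ∈ Subgroup.zpowers a, g (h * z) = h⁻¹ * g z := by
  have hpowers : ∀ h ∈ Subgroup.zpowers a, ∃ n : ℕ, a ^ n = h := fun h hh =>
    hfin.mem_powers_iff_mem_zpowers.2 hh
  rcases hstep z with hz | hz
  · left
    rintro h hh
    obtain ⟨n, rfl⟩ := hpowers h hh
    exact map_pow_mul_eq_pow_mul hg ha hstep hz n
  · right
    rintro h hh
    obtain ⟨n, rfl⟩ := hpowers h hh
    rw [← inv_pow]
    exact map_pow_mul_eq_pow_mul hg ha (by simpa [or_comm] using hstep) hz n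

end Linearization

section Swap

open Subgroup

variable {G : Type*} [Group G] {a c : G}

theorem commute_pow_four_of_conj_sq_eq {u v : G} (hu : u = a ∨ u = a⁻¹) (hv : v = a ∨ v = a⁻¹)
    (h : c ^ 2 * v * (c ^ 2)⁻¹ = u) : Commute (c ^ 4) a := by
  have hinv : c ^ 2 * a⁻¹ * (c ^ 2)⁻¹ = (c ^ 2 * a * (c ^ 2)⁻¹)⁻¹ := by group
  have hsq : c ^ 2 * a * (c ^ 2)⁻¹ = a ∨ c ^ 2 * a * (c ^ 2)⁻¹ = a⁻¹ := by
    rcases hv with rfl | rfl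
    · rcases hu with rfl | rfl <;> simp [h]
    · rw [hinv, inv_eq_iff_eq_inv] at h
      rcases hu with rfl | rfl <;> simp [h]
  have hfour : c ^ 4 * a * (c ^ 4)⁻¹ = c ^ 2 * (c ^ 2 * a * (c ^ 2)⁻¹) * (c ^ 2)⁻¹ := by group
  refine mul_inv_eq_iff_eq_mul.1 ?_
  rcases hsq with h' | h'
  · rw [hfour, h', h']
  · rw [hfour, h', hinv, h', inv_inv]

theorem exists_mul_inv_eq_of_mem_one_self_inv {s : G} (hs : s ∈ ({1, a, a⁻¹} : Set G)) :
    ∃ t ∈ ({1, a, a⁻¹} : Set G), t * s⁻¹ = a ∨ t * s⁻¹ = a⁻¹ := by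
  rcases hs with rfl | rfl | rfl
  exacts [⟨a, by simp⟩, ⟨1, by simp⟩, ⟨1, by simp⟩]

theorem mul_inv_notMem (ha1 : a ≠ 1) (hc : c ∉ zpowers a) {v : G} (hv : v = a ∨ v = a⁻¹) :
    c * v⁻¹ ∉ ({1, a, a⁻¹, c} : Set G) := by
  have hv' : v ∈ zpowers a := by rcases hv with rfl | rfl <;> simp [mem_zpowers]
  intro hmem
  simp only [Set.mem_insert_iff, Set.mem_singleton_iff] at hmem
  rcases hmem with h | h | h | h <;> rw [mul_inv_eq_iff_eq_mul] at h
  · exact hc (by simpa [h] using hv')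
  · exact hc (h ▸ (zpowers a).mul_mem (mem_zpowers a) hv')
  · exact hc (h ▸ (zpowers a).mul_mem ((zpowers a).inv_mem (mem_zpowers a)) hv')
  · rcases hv with rfl | rfl
    · exact ha1 (left_eq_mul.1 h)
    · exact ha1 (inv_eq_one.1 (left_eq_mul.1 h))

/-- Among the neighbours of a vertex, the `c`-neighbour is the only one not related to another one
by a factor `a^{±1}`. -/
theorem map_mul_eq_inv_mul {α β : G → G} (ha1 : a ≠ 1) (hc : c ∉ zpowers a)
    (hadj : ∀ x y,
      y * x⁻¹ ∈ ({1, a, a⁻¹, c} : Set G) ↔ α x * (β y)⁻¹ ∈ ({1, a, a⁻¹, c} : Set G))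
    (hβ : Function.Surjective β)
    (hrel : ∀ y y', y' * y⁻¹ = a ∨ y' * y⁻¹ = a⁻¹ →
      β y' * (β y)⁻¹ = a ∨ β y' * (β y)⁻¹ = a⁻¹) (x : G) :
    β (c * x) = c⁻¹ * α x := by
  obtain ⟨y, hy⟩ := hβ (c⁻¹ * α x)
  suffices y = c * x by rwa [← this]
  by_contra hne
  have hyS : y * x⁻¹ ∈ ({1, a, a⁻¹, c} : Set G) := (hadj x y).2 (by simp [hy])
  have hyA : y * x⁻¹ ∈ ({1, a, a⁻¹} : Set G) := by
    rcases hyS with h | h | h | h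
    · exact Or.inl h
    · exact Or.inr (Or.inl h)
    · exact Or.inr (Or.inr h)
    · exact absurd (mul_inv_eq_iff_eq_mul.1 h) hne
  obtain ⟨t, htA, ht⟩ := exists_mul_inv_eq_of_mem_one_self_inv hyA
  have htS : (t * x) * x⁻¹ ∈ ({1, a, a⁻¹, c} : Set G) := by
    rw [mul_inv_cancel_right]
    rcases htA with rfl | rfl | rfl <;> simp
  have hv := hrel y (t * x) (by simpa [mul_assoc] using ht)
  have hprod : α x * (β (t * x))⁻¹ = c * (β (t * x) * (β y)⁻¹)⁻¹ := by rw [hy]; group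
  exact mul_inv_notMem ha1 hc hv (hprod ▸ (hadj x (t * x)).1 htS)

theorem ne_one_and_mul_self_ne_one (ha : 5 ≤ orderOf a) : a ≠ 1 ∧ a * a ≠ 1 := by
  constructor
  · rintro rfl
    simp at ha
  · intro h
    have := orderOf_le_of_pow_eq_one (x := a) (by norm_num : 0 < 2) (by rwa [sq])
    omega

theorem false_of_swap [(zpowers a).Normal] (ha : 5 ≤ orderOf a) (hc : c ∉ zpowers a)
    (hc4 : ¬Commute (c ^ 4) a) {α β : G → G} (hβ : Function.Bijective β)
    (hadj : ∀ x y,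
      y * x⁻¹ ∈ ({1, a, a⁻¹, c} : Set G) ↔ α x * (β y)⁻¹ ∈ ({1, a, a⁻¹, c} : Set G))
    (hαrel : ∀ x x', x' * x⁻¹ = a ∨ x' * x⁻¹ = a⁻¹ →
      α x' * (α x)⁻¹ = a ∨ α x' * (α x)⁻¹ = a⁻¹)
    (hβrel : ∀ y y', y' * y⁻¹ = a ∨ y' * y⁻¹ = a⁻¹ →
      β y' * (β y)⁻¹ = a ∨ β y' * (β y)⁻¹ = a⁻¹) : False := by
  obtain ⟨ha1, ha2⟩ := ne_one_and_mul_self_ne_one ha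
  have hC := map_mul_eq_inv_mul ha1 hc hadj hβ.2 hβrel
  have hβstep : ∀ y, β (a * y) = a * β y ∨ β (a * y) = a⁻¹ * β y := fun y => by
    simpa only [mul_inv_eq_iff_eq_mul] using hβrel y (a * y) (by simp)
  have hconj : c * a * c⁻¹ ∈ zpowers a := Normal.conj_mem ‹_› a (mem_zpowers a) c
  obtain ⟨v, hv, hca⟩ : ∃ v, (v = a ∨ v = a⁻¹) ∧ β (c * a) = c * v * c⁻¹ * β c := by
    rcases map_mul_eq_or_eq_inv_of_mem_zpowers hβ.1 ha2 (orderOf_pos_iff.1 (by omega))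
      hβstep c with h | h
    · exact ⟨a, Or.inl rfl, by simpa using h _ hconj⟩
    · exact ⟨a⁻¹, Or.inr rfl, by simpa [mul_assoc] using h _ hconj⟩
  apply hc4
  refine commute_pow_four_of_conj_sq_eq (hαrel 1 a (by simp)) hv ?_
  have hc1 : β c = c⁻¹ * α 1 := by simpa using hC 1
  calc c ^ 2 * v * (c ^ 2)⁻¹ = c * (c * v * c⁻¹ * (c⁻¹ * α 1)) * (α 1)⁻¹ := by rw [sq]; group
    _ = α a * (α 1)⁻¹ := by rw [← hc1, ← hca, hC a]; group

end Swap

section Automorphism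

open Subgroup

variable {G : Type*} [Group G]

theorem haarGraph_fst_map_eq_or_ne {S : Set G} (hS : (haarGraph S).Preconnected)
    (f : haarGraph S ≃g haarGraph S) : (∀ v, (f v).1 = v.1) ∨ ∀ v, (f v).1 ≠ v.1 := by
  have hf : ∀ ⦃u v⦄, (haarGraph S).Adj u v → (f u).1 ≠ (f v).1 := fun u v huv =>
    haarGraph_adj_fst_ne (f.map_adj_iff.2 huv)
  by_cases h : (f (false, 1)).1 = false
  · exact Or.inl fun v =>
      ((hS (false, 1) v).eq_iff_eq_of_adj_ne hf (fun _ _ => haarGraph_adj_fst_ne)).1 h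
  · exact Or.inr fun v hv =>
      h (((hS (false, 1) v).eq_iff_eq_of_adj_ne hf (fun _ _ => haarGraph_adj_fst_ne)).2 hv)

variable {a c : G} [(zpowers a).Normal]

theorem haarGraph_iso_mul_inv_eq_or_eq_inv (ha : 5 ≤ orderOf a) (hc : c ∉ zpowers a)
    (hc2 : c * c ∉ zpowers a)
    (f : haarGraph ({1, a, a⁻¹, c} : Set G) ≃g haarGraph {1, a, a⁻¹, c}) {i j : Bool}
    {x x' x₁ x₁' : G} (hx : f (i, x) = (j, x₁)) (hx' : f (i, x') = (j, x₁'))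
    (h : x' * x⁻¹ = a ∨ x' * x⁻¹ = a⁻¹) : x₁' * x₁⁻¹ = a ∨ x₁' * x₁⁻¹ = a⁻¹ := by
  have ha1 := (ne_one_and_mul_self_ne_one ha).1
  have hne : x ≠ x' := by
    rintro rfl
    rcases h with h | h <;> simp [eq_comm, ha1] at h
  have hne₁ : x₁ ≠ x₁' := by
    rintro rfl
    exact hne (by simpa using f.injective (hx.trans hx'.symm))
  have hcommon :=
    (haarGraph_commonNeighbors_nontrivial_iff _ (mem_zpowers a) ha hc hc2 i hne).2 h
  rw [← f.commonNeighbors_nontrivial_iff, hx, hx'] at hcommon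
  exact (haarGraph_commonNeighbors_nontrivial_iff _ (mem_zpowers a) ha hc hc2 j hne₁).1 hcommon

theorem haarGraph_fst_map_eq (ha : 5 ≤ orderOf a) (hc : c ∉ zpowers a)
    (hc2 : c * c ∉ zpowers a) (hc4 : ¬Commute (c ^ 4) a)
    (hgen : closure ({1, a, a⁻¹, c} : Set G) = ⊤)
    (f : haarGraph ({1, a, a⁻¹, c} : Set G) ≃g haarGraph {1, a, a⁻¹, c}) (v : Bool × G) :
    (f v).1 = v.1 := by
  refine (haarGraph_fst_map_eq_or_ne (haarGraph_preconnected (by simp) hgen) f).resolve_right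
    (fun hswap => ?_) v
  have hfst : ∀ i x, (f (i, x)).1 = !i := fun i x => by
    have := hswap (i, x)
    cases i <;> simpa using this
  have hflip : ∀ i x, f (i, x) = (!i, (f (i, x)).2) := fun i x => Prod.ext (hfst i x) rfl
  have hβ : Function.Bijective fun y => (f (true, y)).2 := by
    refine ⟨fun y y' h => ?_, fun w => ?_⟩
    · simpa using f.injective (Prod.ext (by rw [hfst, hfst]) h)
    · obtain ⟨⟨i, y⟩, hy⟩ := f.surjective (false, w)
      cases i
      · simpa [hy] using hswap (false, y)
      · exact ⟨y, by simp [hy]⟩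
  refine false_of_swap ha hc hc4 hβ (fun x y => ?_)
    (fun _ _ => haarGraph_iso_mul_inv_eq_or_eq_inv ha hc hc2 f (hflip false _) (hflip false _))
    (fun _ _ => haarGraph_iso_mul_inv_eq_or_eq_inv ha hc hc2 f (hflip true _) (hflip true _))
  rw [← haarGraph_adj_false_true, ← f.map_adj_iff, hflip false x, hflip true y]
  simp

end Automorphism

section InnerAbelian

open Subgroup

variable {G : Type*} [Group G] {a b : G}

theorem Subgroup.eq_zpowers_of_natCard_eq_prime {K : Subgroup G} {p : ℕ} (hp : p.Prime)
    (hK : Nat.card K = p) (ha : a ∈ K) (ha1 : a ≠ 1) : K = zpowers a := by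
  have : Finite K := Nat.finite_of_card_ne_zero (by rw [hK]; exact hp.ne_zero)
  have hdvd : orderOf a ∣ p := hK ▸ Nat.card_zpowers a ▸ card_dvd_of_le (zpowers_le.2 ha)
  have horder : orderOf a = p := ((Nat.dvd_prime hp).1 hdvd).resolve_left (by simpa using ha1)
  exact (eq_of_le_of_card_ge (zpowers_le.2 ha) (by rw [hK, Nat.card_zpowers, horder])).symm

theorem IsPGroup.odd_orderOf {q : ℕ} (hq : q.Prime) (hq2 : q ≠ 2) {Q : Subgroup G}
    (hQ : IsPGroup q Q) (hb : b ∈ Q) : Odd (orderOf b) := by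
  obtain ⟨k, hk⟩ := hQ ⟨b, hb⟩
  exact (hq.odd_of_ne_two hq2).pow.of_dvd_nat
    (orderOf_dvd_of_pow_eq_one (by simpa using congrArg Subtype.val hk))

theorem Commute.of_pow_left_of_coprime {n : ℕ} (h : Commute (b ^ n) a)
    (hn : n.Coprime (orderOf b)) : Commute b a := by
  obtain ⟨m, hm⟩ := exists_pow_eq_self_of_coprime hn
  exact hm ▸ h.pow_left m

theorem Commute.all_of_sup_zpowers_eq_top (h : zpowers a ⊔ zpowers b = ⊤) (hab : Commute a b)
    (x y : G) : Commute x y := by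
  have hk : closure ({a, b} : Set G) = ⊤ := by
    rw [← h, Set.insert_eq, Subgroup.closure_union, zpowers_eq_closure, zpowers_eq_closure]
  have hcomm := isMulCommutative_closure (k := {a, b}) (by
    rintro x (rfl | rfl) y (rfl | rfl) <;> first | rfl | exact hab.eq | exact hab.eq.symm)
  exact congrArg Subtype.val (hcomm.is_comm.comm ⟨x, hk ▸ mem_top x⟩ ⟨y, hk ▸ mem_top y⟩)

theorem eq_one_or_eq_or_eq_inv_of_orderOf_le_three {g : G} (h0 : 0 < orderOf a)
    (h3 : orderOf a ≤ 3) (hg : g ∈ zpowers a) : g = 1 ∨ g = a ∨ g = a⁻¹ := by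
  obtain ⟨m, rfl⟩ := (Submonoid.mem_powers_iff _ _).1
    ((orderOf_pos_iff.1 h0).mem_powers_iff_mem_zpowers.2 hg)
  rw [← pow_mod_orderOf]
  have hlt : m % orderOf a < orderOf a := Nat.mod_lt _ h0
  have hlt3 : m % orderOf a < 3 := by omega
  interval_cases hr : m % orderOf a
  · simp
  · simp
  · right; right
    rw [eq_inv_iff_mul_eq_one, ← pow_succ, show 2 + 1 = orderOf a by omega, pow_orderOf_eq_one]

/-- For `orderOf a ≤ 3` the conjugate `b² a b⁻²` would be `a^{±1}`. -/
theorem five_le_orderOf [(zpowers a).Normal] (hp : (orderOf a).Prime)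
    (hb4 : ¬Commute (b ^ 4) a) : 5 ≤ orderOf a := by
  by_contra hlt
  have h3 : orderOf a ≤ 3 := by
    have : orderOf a ≠ 4 := fun h => by rw [h] at hp; norm_num at hp
    omega
  have hconj : b ^ 2 * a * (b ^ 2)⁻¹ ∈ zpowers a := Normal.conj_mem ‹_› a (mem_zpowers a) _
  obtain h | h := eq_one_or_eq_or_eq_inv_of_orderOf_le_three hp.pos h3 hconj
  · rw [conj_eq_one_iff] at h
    simp [h, Nat.not_prime_one] at hp
  · exact hb4 (commute_pow_four_of_conj_sq_eq h (Or.inl rfl) rfl)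

end InnerAbelian

theorem haar_aut_preserves_bipartition_n_eq_one_general
    {H : Type*} [Group H] (p q : ℕ) (hp : p.Prime) (hq : q.Prime)
    (hq2 : 2 < q)
    (hIA : IsInnerAbelian H)
    (P : Sylow p H) (hPnorm : (P : Subgroup H).Normal)
    (hPcard : Nat.card (P : Subgroup H) = p)
    (b : H) (Q : Sylow q H) (hQ : (Q : Subgroup H) = Subgroup.zpowers b)
    (hHPQ : (P : Subgroup H) ⊔ Subgroup.zpowers b = ⊤)
    (a : H) (haP : a ∈ (P : Subgroup H)) (ha1 : a ≠ 1)
    (f : haarGraph ({1, a, a⁻¹, b} : Set H) ≃g haarGraph ({1, a, a⁻¹, b} : Set H)) :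
    ∀ v : Bool × H, (f v).1 = v.1 := by
  have hPa := Subgroup.eq_zpowers_of_natCard_eq_prime hp hPcard haP ha1
  have horder : orderOf a = p := by rw [← Nat.card_zpowers, ← hPa, hPcard]
  have : (Subgroup.zpowers a).Normal := hPa ▸ hPnorm
  have hab : ¬Commute b a := fun h => hIA.1 fun x y =>
    Commute.all_of_sup_zpowers_eq_top (hPa ▸ hHPQ) h.symm x y
  have hodd : Odd (orderOf b) :=
    Q.isPGroup'.odd_orderOf hq (by omega) (hQ ▸ Subgroup.mem_zpowers b)
  have hpow : ∀ k, ¬Commute (b ^ 2 ^ k) a := fun k h =>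
    hab (h.of_pow_left_of_coprime (Nat.Coprime.pow_left k (Nat.coprime_two_left.2 hodd)))
  have hzpow : ∀ k, b ^ 2 ^ k ∉ Subgroup.zpowers a := fun k ⟨n, hn⟩ =>
    hpow k (hn ▸ (Commute.refl a).zpow_left n)
  refine haarGraph_fst_map_eq (five_le_orderOf (horder ▸ hp) (hpow 2)) (by simpa using hzpow 0)
    (by simpa [sq] using hzpow 1) (hpow 2) ?_ f
  rw [eq_top_iff, ← hHPQ, hPa]
  exact sup_le (Subgroup.zpowers_le.2 (Subgroup.subset_closure (by simp)))
    (Subgroup.zpowers_le.2 (Subgroup.subset_closure (by simp)))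

theorem haar_aut_preserves_bipartition_n_eq_one
    {H : Type*} [Group H] [Finite H] (p q : ℕ) (hp : p.Prime) (hq : q.Prime)
    (hpq : p ≠ q) (hq2 : 2 < q)
    (hIA : IsInnerAbelian H)
    (P : Sylow p H) (hPnorm : (P : Subgroup H).Normal)
    (hPcard : Nat.card (P : Subgroup H) = p)
    (b : H) (Q : Sylow q H) (hQ : (Q : Subgroup H) = Subgroup.zpowers b)
    (hHPQ : (P : Subgroup H) ⊔ Subgroup.zpowers b = ⊤)
    (a : H) (haP : a ∈ (P : Subgroup H)) (ha1 : a ≠ 1)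
    (f : haarGraph ({1, a, a⁻¹, b} : Set H) ≃g haarGraph ({1, a, a⁻¹, b} : Set H)) :
    ∀ v : Bool × H, (f v).1 = v.1 :=
  haar_aut_preserves_bipartition_n_eq_one_general p q hp hq hq2 hIA P hPnorm hPcard b Q hQ hHPQ a
    haP ha1 f
end
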